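/- arXiv:2010.11756 — 5 statements merged into one kernel-verified Lean document; each statement's English description precedes it below -/
import Mathlib

section
/- Let b = 5·2^n with n ≥ 2, and let x be an integer with b/2 ≤ x ≤ b − 1 such that 2^n does not divide x. If (u, v) is a base-b difference pair and L ≥ 0 satisfies K^L(u, v) = (x, b − x), then L ≤ n − 1. -/
/-- The four base-`b` digits of `x` (viewed as a 4-digit string with leading
zeros allowed), sorted in decreasing order. -/
def sortedDigits (b x : ℕ) : List ℕ :=
  List.insertionSort (· ≥ ·) [x % b, x / b % b, x / b ^ 2 % b, x / b ^ 3 % b]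

/-- The 4-digit base-`b` Kaprekar function `K_b(x) = D - A`. -/
def Kap (b x : ℕ) : ℕ :=
  let l := sortedDigits b x
  (l[0]! * b ^ 3 + l[1]! * b ^ 2 + l[2]! * b + l[3]!) -
    (l[3]! * b ^ 3 + l[2]! * b ^ 2 + l[1]! * b + l[0]!)

/-- The difference pair `(a₃ - a₀, a₂ - a₁)` of a 4-digit base-`b` input. -/
def diffPair (b x : ℕ) : ℕ × ℕ :=
  let l := sortedDigits b x
  (l[0]! - l[3]!, l[1]! - l[2]!)

/-- `S_b`: the set of 4-digit base-`b` inputs whose sequence of Kaprekar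
iterates is eventually constant and nonzero. -/
def KapSet (b : ℕ) : Set ℕ :=
  {x | x < b ^ 4 ∧
    ∃ t, (∀ s, t ≤ s → (Kap b)^[s] x = (Kap b)^[t] x) ∧ (Kap b)^[t] x ≠ 0}

/-- Arrange the two coordinates of a pair in decreasing order. -/
def sort2 (p : ℕ × ℕ) : ℕ × ℕ := (max p.1 p.2, min p.1 p.2)

/-- A base-`b` difference pair: `b - 1 ≥ d ≥ d' ≥ 0`. -/
def IsDiffPair (b : ℕ) (p : ℕ × ℕ) : Prop := p.2 ≤ p.1 ∧ p.1 ≤ b - 1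

/-- The Kaprekar map on base-`b` difference pairs. -/
def Kpair (b : ℕ) (p : ℕ × ℕ) : ℕ × ℕ :=
  if p.1 = 0 ∧ p.2 = 0 then (0, 0)
  else if p.2 = 0 then
    -- type (c)
    sort2 (p.1 - 1, b - p.1)
  else if p.1 = p.2 ∨ p.1 + p.2 = b then
    -- type (b)
    sort2 ((2 * (p.1 : ℤ) - ((b : ℤ) - 1)).natAbs,
           (2 * (p.1 : ℤ) - ((b : ℤ) + 1)).natAbs)
  else
    -- type (a)
    sort2 ((2 * (p.1 : ℤ) - (b : ℤ)).natAbs, (2 * (p.2 : ℤ) - (b : ℤ)).natAbs)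

-- ===== auxiliary development for the main theorem =====

private lemma natAbs_pm (z : ℤ) : ((z.natAbs : ℤ) = z) ∨ ((z.natAbs : ℤ) = -z) := by
  rcases Int.natAbs_eq z with h | h
  · left; omega
  · right; omega

private lemma bdd_eq_zero {M V : ℤ} (hM : 0 < M) (h : M ∣ V) (h1 : -M < V) (h2 : V < M) :
    V = 0 := by
  obtain ⟨t, rfl⟩ := h
  have ht1 : -1 < t := by
    have : M * (-1) < M * t := by linarith
    exact lt_of_mul_lt_mul_left this hM.le
  have ht2 : t < 1 := by
    have : M * t < M * 1 := by linarith
    exact lt_of_mul_lt_mul_left this hM.le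
  have : t = 0 := by omega
  rw [this, mul_zero]

private lemma bdd_cases {M V : ℤ} (hM : 0 < M) (h : M ∣ V) (h1 : -(2*M) < V) (h2 : V < 2*M) :
    V = -M ∨ V = 0 ∨ V = M := by
  obtain ⟨t, rfl⟩ := h
  have ht1 : -2 < t := by
    have : M * (-2) < M * t := by linarith
    exact lt_of_mul_lt_mul_left this hM.le
  have ht2 : t < 2 := by
    have : M * t < M * 2 := by linarith
    exact lt_of_mul_lt_mul_left this hM.le
  interval_cases t
  · left; ring
  · right; left; ring
  · right; right; ring

private lemma tpnd {j : ℕ} : ¬ ((2:ℤ)^(j+1) ∣ 2^j) := by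
  rintro ⟨t, ht⟩
  have h2 : ((2:ℤ)^j) ≠ 0 := pow_ne_zero _ two_ne_zero
  have ht' : (2:ℤ)^j = 2^j * (2*t) := by
    calc (2:ℤ)^j = 2^(j+1)*t := ht
    _ = 2^j * (2*t) := by ring
  have := mul_left_cancel₀ h2 (by linarith : (2:ℤ)^j * 1 = 2^j * (2*t))
  omega

/-- X-type invariant. -/
def Qx (b x : ℕ) (j : ℕ) (c₁ c₂ : ℕ) : Prop :=
  ∃ e1 e2 dl : ℤ, (e1 = 1 ∨ e1 = -1) ∧ (e2 = 1 ∨ e2 = -1) ∧ (dl = 0 ∨ dl = 1) ∧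
    ((2*(b:ℤ)) ∣ 2^j * (c₁:ℤ) - (e1*(x:ℤ) + dl*(b:ℤ))) ∧
    ((2*(b:ℤ)) ∣ 2^j * (c₂:ℤ) - (e2*(x:ℤ) + (1-dl)*(b:ℤ)))

/-- H-type invariant. -/
def Qh (r b : ℕ) (j : ℕ) (c₁ c₂ : ℕ) : Prop :=
  ∃ e1 e2 : ℤ, (e1 = 1 ∨ e1 = -1) ∧ (e2 = 1 ∨ e2 = -1) ∧
    ((2*(b:ℤ)) ∣ 2^j * (c₁:ℤ) - e1*(5*2^r)) ∧
    ((2*(b:ℤ)) ∣ 2^j * (c₂:ℤ) - e2*(5*2^r))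

/-- combined invariant -/
def Qi (r b x j : ℕ) (p : ℕ × ℕ) : Prop := Qx b x j p.1 p.2 ∨ Qh r b j p.1 p.2

private lemma Qi_swap {r b x j : ℕ} {c₁ c₂ : ℕ} (h : Qi r b x j (c₁, c₂)) :
    Qi r b x j (c₂, c₁) := by
  rcases h with ⟨e1, e2, dl, he1, he2, hdl, h1, h2⟩ | ⟨e1, e2, he1, he2, h1, h2⟩
  · refine Or.inl ⟨e2, e1, 1 - dl, he2, he1, by omega, ?_, ?_⟩
    · exact h2
    · have heq : (1 - (1 - dl)) = dl := by ring
      rw [heq]; exact h1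
  · exact Or.inr ⟨e2, e1, he2, he1, h2, h1⟩

private lemma Qi_sort {r b x j : ℕ} {c₁ c₂ : ℕ} (h : Qi r b x j (sort2 (c₁, c₂))) :
    Qi r b x j (c₁, c₂) := by
  unfold sort2 at h
  rcases le_total c₁ c₂ with hle | hle
  · rw [show max (c₁,c₂).1 (c₁,c₂).2 = c₂ from max_eq_right hle,
      show min (c₁,c₂).1 (c₁,c₂).2 = c₁ from min_eq_left hle] at h
    exact Qi_swap h
  · rw [show max (c₁,c₂).1 (c₁,c₂).2 = c₁ from max_eq_left hle,
      show min (c₁,c₂).1 (c₁,c₂).2 = c₂ from min_eq_right hle] at h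
    exact h

private lemma absorbX {b x : ℕ} {j : ℕ} {A : ℕ} {E e1 dl : ℤ}
    (hA : ((A:ℤ) = E) ∨ ((A:ℤ) = -E)) (he : e1 = 1 ∨ e1 = -1) (hdl : dl = 0 ∨ dl = 1)
    (h : (2*(b:ℤ)) ∣ 2^j * (A:ℤ) - (e1*(x:ℤ) + dl*(b:ℤ))) :
    ∃ f : ℤ, (f = 1 ∨ f = -1) ∧ (2*(b:ℤ)) ∣ 2^j * E - (f*(x:ℤ) + dl*(b:ℤ)) := by
  rcases hA with hA | hA
  · exact ⟨e1, he, by rwa [hA] at h⟩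
  · refine ⟨-e1, by omega, ?_⟩
    have h2 : (2*(b:ℤ)) ∣ 2*dl*(b:ℤ) := ⟨dl, by ring⟩
    have h3 := dvd_sub (dvd_neg.mpr h) h2
    have heq : 2^j * E - (-e1*(x:ℤ) + dl*(b:ℤ))
        = -(2^j * (A:ℤ) - (e1*(x:ℤ) + dl*(b:ℤ))) - 2*dl*(b:ℤ) := by rw [hA]; ring
    rwa [heq]

private lemma absorbH {r b : ℕ} {j : ℕ} {A : ℕ} {E e1 : ℤ}
    (hA : ((A:ℤ) = E) ∨ ((A:ℤ) = -E)) (he : e1 = 1 ∨ e1 = -1)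
    (h : (2*(b:ℤ)) ∣ 2^j * (A:ℤ) - e1*(5*2^r)) :
    ∃ f : ℤ, (f = 1 ∨ f = -1) ∧ (2*(b:ℤ)) ∣ 2^j * E - f*(5*2^r) := by
  rcases hA with hA | hA
  · exact ⟨e1, he, by rwa [hA] at h⟩
  · refine ⟨-e1, by omega, ?_⟩
    have h3 := dvd_neg.mpr h
    have heq : 2^j * E - (-e1)*(5*2^r) = -(2^j * (A:ℤ) - e1*(5*2^r)) := by rw [hA]; ring
    rwa [heq]

private lemma F1 {b x : ℕ} {j : ℕ} {e1 dl W : ℤ} (he1 : e1 = 1 ∨ e1 = -1)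
    (hdvB0 : (2:ℤ)^j ∣ (b:ℤ)) (hdv2B0 : (2:ℤ)^j ∣ 2*(b:ℤ))
    (h : (2*(b:ℤ)) ∣ W - (e1*(x:ℤ) + dl*(b:ℤ))) (hW : (2:ℤ)^j ∣ W) : (2:ℤ)^j ∣ (x:ℤ) := by
  have ha := dvd_trans hdv2B0 h
  have hc' : (2:ℤ)^j ∣ dl*(b:ℤ) := Dvd.dvd.mul_left hdvB0 dl
  have hx1 : (2:ℤ)^j ∣ e1*(x:ℤ) := by
    have heq : e1*(x:ℤ) = W - (W - (e1*(x:ℤ) + dl*(b:ℤ))) - dl*(b:ℤ) := by ring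
    rw [heq]; exact dvd_sub (dvd_sub hW ha) hc'
  have h5 : (2:ℤ)^j ∣ e1*(e1*(x:ℤ)) := Dvd.dvd.mul_left hx1 e1
  rcases he1 with rfl | rfl
  · simpa using h5
  · simpa using h5

private lemma step0 (r b x : ℕ) (j : ℕ) (hb : b = 5*2^(r+1)) (hx1 : 5*2^r ≤ x)
    (hx2 : x ≤ b - 1) (hQ : Qx b x j 0 0 ∨ Qh r b j 0 0) : False := by
  have hBf : (b:ℤ) = 5*2^(r+1) := by rw [hb]; push_cast; ring
  have hB2 : (b:ℤ) = 2*(5*2^r) := by rw [hBf]; ring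
  have hbpos : 0 < b := by rw [hb]; positivity
  have hXlo : (5*2^r:ℤ) ≤ (x:ℤ) := by exact_mod_cast hx1
  have hXhi : (x:ℤ) ≤ (b:ℤ) - 1 := by omega
  have hRpos : (0:ℤ) < 2^r := by positivity
  have hBig : (0:ℤ) < 2*(b:ℤ) := by linarith [hB2]
  rcases hQ with ⟨e1, e2, dl, he1, he2, hdl, h1, h2⟩ | ⟨e1, e2, he1, he2, h1, h2⟩
  · have h1' : (2*(b:ℤ)) ∣ e1*(x:ℤ) + dl*(b:ℤ) := by
      have h3 := dvd_neg.mpr h1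
      have heq : e1*(x:ℤ) + dl*(b:ℤ) = -(2^j * ((0:ℕ):ℤ) - (e1*(x:ℤ) + dl*(b:ℤ))) := by
        push_cast; ring
      rwa [heq]
    rcases he1 with rfl | rfl <;> rcases hdl with rfl | rfl <;>
      · have := bdd_eq_zero hBig h1' (by linarith [hB2]) (by linarith [hB2])
        linarith [hB2]
  · have h1' : (2*(b:ℤ)) ∣ e1*(5*2^r:ℤ) := by
      have h3 := dvd_neg.mpr h1
      have heq : e1*(5*2^r:ℤ) = -(2^j * ((0:ℕ):ℤ) - e1*(5*2^r)) := by push_cast; ring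
      rwa [heq]
    rcases he1 with rfl | rfl <;>
      · have := bdd_eq_zero hBig h1' (by linarith [hB2]) (by linarith [hB2])
        linarith [hB2]

private lemma stepC (r b x j : ℕ) (hb : b = 5*2^(r+1))
    (hj : j ≤ r) (d : ℕ) (hd1 : 1 ≤ d) (hd2 : d ≤ b)
    (hQ : Qx b x j (d-1) (b-d) ∨ Qh r b j (d-1) (b-d)) : False := by
  have hBf : (b:ℤ) = 5*2^(r+1) := by rw [hb]; push_cast; ring
  have hc1 : (((d-1:ℕ)):ℤ) = (d:ℤ) - 1 := by omega
  have hc2 : (((b-d:ℕ)):ℤ) = (b:ℤ) - (d:ℤ) := by omega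
  have hjB : (2:ℤ)^(j+1) ∣ 2^j*(b:ℤ) := ⟨5*2^r, by rw [hBf]; ring⟩
  have hdvB : (2:ℤ)^(j+1) ∣ (b:ℤ) := by
    rw [hBf]; exact Dvd.dvd.mul_left (pow_dvd_pow 2 (by omega)) 5
  have hdv2B : (2:ℤ)^(j+1) ∣ 2*(b:ℤ) := hdvB.mul_left 2
  have hdvB0 : (2:ℤ)^j ∣ (b:ℤ) := dvd_trans (pow_dvd_pow 2 (by omega)) hdvB
  have hdv2B0 : (2:ℤ)^j ∣ 2*(b:ℤ) := hdvB0.mul_left 2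
  rcases hQ with ⟨e1, e2, dl, he1, he2, hdl, h1, h2⟩ | ⟨e1, e2, he1, he2, h1, h2⟩
  · rw [hc1] at h1; rw [hc2] at h2
    have hxd : (2:ℤ)^j ∣ (x:ℤ) := F1 he1 hdvB0 hdv2B0 h1 (dvd_mul_right _ _)
    obtain ⟨y, hy⟩ := hxd
    have hsum := dvd_add h1 h2
    have hsum' : (2*(b:ℤ)) ∣ 2^j*(b:ℤ) - 2^j - ((e1+e2)*(x:ℤ)) - (b:ℤ) := by
      have heq : (2^j * ((d:ℤ)-1) - (e1*(x:ℤ) + dl*(b:ℤ)))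
          + (2^j * ((b:ℤ)-(d:ℤ)) - (e2*(x:ℤ) + (1-dl)*(b:ℤ)))
          = 2^j*(b:ℤ) - 2^j - ((e1+e2)*(x:ℤ)) - (b:ℤ) := by ring
      rwa [heq] at hsum
    obtain ⟨u, hu⟩ : ∃ u : ℤ, e1 + e2 = 2*u := ⟨(e1+e2)/2, by omega⟩
    have h2ux : (2:ℤ)^(j+1) ∣ (e1+e2)*(x:ℤ) := ⟨u*y, by rw [hu, hy]; ring⟩
    have hV := dvd_trans hdv2B hsum'
    have hfin : (2:ℤ)^(j+1) ∣ 2^j := by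
      have heq : (2:ℤ)^j = 2^j*(b:ℤ)
          - (2^j*(b:ℤ) - 2^j - ((e1+e2)*(x:ℤ)) - (b:ℤ)) - ((e1+e2)*(x:ℤ)) - (b:ℤ) := by ring
      rw [heq]; exact dvd_sub (dvd_sub (dvd_sub hjB hV) h2ux) hdvB
    exact tpnd hfin
  · rw [hc1] at h1; rw [hc2] at h2
    have hsum := dvd_add h1 h2
    have hsum' : (2*(b:ℤ)) ∣ 2^j*(b:ℤ) - 2^j - ((e1+e2)*(5*2^r)) := by
      have heq : (2^j * ((d:ℤ)-1) - e1*(5*2^r))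
          + (2^j * ((b:ℤ)-(d:ℤ)) - e2*(5*2^r))
          = 2^j*(b:ℤ) - 2^j - ((e1+e2)*(5*2^r)) := by ring
      rwa [heq] at hsum
    obtain ⟨u, hu⟩ : ∃ u : ℤ, e1 + e2 = 2*u := ⟨(e1+e2)/2, by omega⟩
    have hdvH : (2:ℤ)^(j+1) ∣ (e1+e2)*(5*2^r:ℤ) := by
      have hbb : (2:ℤ)^(j+1) ∣ 2*(5*2^r:ℤ) := by
        rw [show (2*(5*2^r):ℤ) = 5*2^(r+1) from by ring, ← hBf]; exact hdvB
      have heq : (e1+e2)*(5*2^r:ℤ) = u*(2*(5*2^r:ℤ)) := by rw [hu]; ring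
      rw [heq]; exact Dvd.dvd.mul_left hbb u
    have hV := dvd_trans hdv2B hsum'
    have hfin : (2:ℤ)^(j+1) ∣ 2^j := by
      have heq : (2:ℤ)^j = 2^j*(b:ℤ)
          - (2^j*(b:ℤ) - 2^j - ((e1+e2)*(5*2^r))) - ((e1+e2)*(5*2^r)) := by ring
      rw [heq]; exact dvd_sub (dvd_sub hjB hV) hdvH
    exact tpnd hfin

-- continuation: stepB
private lemma stepB (r b x j : ℕ) (hb : b = 5*2^(r+1)) (hx1 : 5*2^r ≤ x) (hx2 : x ≤ b - 1)
    (hj : j ≤ r) (d e : ℕ) (hde : e = d ∨ d + e = b)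
    (hQ : Qx b x j (2*(d:ℤ) - ((b:ℤ)-1)).natAbs (2*(d:ℤ) - ((b:ℤ)+1)).natAbs ∨
          Qh r b j (2*(d:ℤ) - ((b:ℤ)-1)).natAbs (2*(d:ℤ) - ((b:ℤ)+1)).natAbs) :
    Qx b x (j+1) d e ∨ Qh r b (j+1) d e := by
  have hBf : (b:ℤ) = 5*2^(r+1) := by rw [hb]; push_cast; ring
  have hB2 : (b:ℤ) = 2*(5*2^r) := by rw [hBf]; ring
  have hbpos : 0 < b := by rw [hb]; positivity
  have hXlo : (5*2^r:ℤ) ≤ (x:ℤ) := by exact_mod_cast hx1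
  have hXhi : (x:ℤ) ≤ (b:ℤ) - 1 := by omega
  have hRpos : (0:ℤ) < 2^(r+1) := by positivity
  have hPpos : (0:ℤ) < 2^(j+1) := by positivity
  have hPle : (2:ℤ)^(j+1) ≤ 2^(r+1) := pow_le_pow_right₀ (by norm_num) (by omega)
  have hBig : (0:ℤ) < 2*(b:ℤ) := by linarith [hBf, hRpos]
  rcases hQ with ⟨e1, e2, dl, he1, he2, hdl, h1, h2⟩ | ⟨e1, e2, he1, he2, h1, h2⟩
  · -- X type
    obtain ⟨f1, hf1, h1'⟩ := absorbX (natAbs_pm _) he1 hdl h1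
    obtain ⟨f2, hf2, h2'⟩ := absorbX (natAbs_pm _) he2 (by omega : (1-dl : ℤ) = 0 ∨ (1-dl : ℤ) = 1) h2
    have hdiff := dvd_sub h1' h2'
    have hdiff' : (2*(b:ℤ)) ∣ 2^(j+1) - (f1-f2)*(x:ℤ) + (1-2*dl)*(b:ℤ) := by
      have heq : (2^j * (2*(d:ℤ) - ((b:ℤ)-1)) - (f1*(x:ℤ) + dl*(b:ℤ)))
          - (2^j * (2*(d:ℤ) - ((b:ℤ)+1)) - (f2*(x:ℤ) + (1-dl)*(b:ℤ)))
          = 2^(j+1) - (f1-f2)*(x:ℤ) + (1-2*dl)*(b:ℤ) := by ring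
      rwa [heq] at hdiff
    -- key scenario handler
    have key : (2*(b:ℤ)) ∣ 2^j * (2*(d:ℤ) - ((b:ℤ)-1)) - (1*(x:ℤ) + dl*(b:ℤ)) →
        2*(x:ℤ) = 2^(j+1) + (b:ℤ) → Qx b x (j+1) d e ∨ Qh r b (j+1) d e := by
      intro h1'' hscen
      have hXval : (x:ℤ) = 2^j + 5*2^r := by
        have : (2:ℤ)^(j+1) = 2*2^j := by ring
        linarith [hB2]
      have hmain : (2*(b:ℤ)) ∣ 2^(j+1)*(d:ℤ) - (5*2^r) - (2^j + dl)*(b:ℤ) := by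
        have heq : 2^(j+1)*(d:ℤ) - (5*2^r) - (2^j + dl)*(b:ℤ)
            = 2^j * (2*(d:ℤ) - ((b:ℤ)-1)) - (1*(x:ℤ) + dl*(b:ℤ)) := by rw [hXval]; ring
        rw [heq]; exact h1''
      have efin : ∀ s : ℤ, (s = 1 ∨ s = -1) →
          ((2*(b:ℤ)) ∣ 2^(j+1)*(d:ℤ) - s*(5*2^r)) → Qx b x (j+1) d e ∨ Qh r b (j+1) d e := by
        intro s hs hd'
        rcases hde with rfl | hsum
        · exact Or.inr ⟨s, s, hs, hs, hd', hd'⟩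
        · have he' : (e:ℤ) = (b:ℤ) - (d:ℤ) := by omega
          have he'' : (2*(b:ℤ)) ∣ 2^(j+1)*(e:ℤ) - (-s)*(5*2^r) := by
            have h4 : (2*(b:ℤ)) ∣ 2^(j+1)*(b:ℤ) := ⟨2^j, by ring⟩
            have heq : 2^(j+1)*(e:ℤ) - (-s)*(5*2^r)
                = 2^(j+1)*(b:ℤ) - (2^(j+1)*(d:ℤ) - s*(5*2^r)) := by rw [he']; ring
            rw [heq]; exact dvd_sub h4 hd'
          exact Or.inr ⟨s, -s, hs, by omega, hd', he''⟩
      rcases Int.even_or_odd (2^j + dl) with ⟨t, ht⟩ | ⟨t, ht⟩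
      · refine efin 1 (Or.inl rfl) ?_
        have h3 : (2*(b:ℤ)) ∣ (2^j + dl)*(b:ℤ) := ⟨t, by rw [ht]; ring⟩
        have heq : 2^(j+1)*(d:ℤ) - 1*(5*2^r)
            = (2^(j+1)*(d:ℤ) - (5*2^r) - (2^j + dl)*(b:ℤ)) + (2^j + dl)*(b:ℤ) := by ring
        rw [heq]; exact dvd_add hmain h3
      · refine efin (-1) (Or.inr rfl) ?_
        have h3 : (2*(b:ℤ)) ∣ (2^j + dl)*(b:ℤ) + 2*(5*2^r) := by
          refine ⟨t+1, ?_⟩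
          rw [ht, hB2]; ring
        have heq : 2^(j+1)*(d:ℤ) - (-1)*(5*2^r)
            = (2^(j+1)*(d:ℤ) - (5*2^r) - (2^j + dl)*(b:ℤ)) + ((2^j + dl)*(b:ℤ) + 2*(5*2^r)) := by
          ring
        rw [heq]; exact dvd_add hmain h3
    rcases hf1 with rfl | rfl <;> rcases hf2 with rfl | rfl <;> rcases hdl with rfl | rfl
    · -- f1=1 f2=1 dl=0 : V = 2^{j+1} + b
      exfalso
      have hV : (2*(b:ℤ)) ∣ 2^(j+1) + (b:ℤ) := by
        have heq : 2^(j+1) - ((1:ℤ)-1)*(x:ℤ) + (1-2*0)*(b:ℤ) = 2^(j+1) + (b:ℤ) := by ring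
        rwa [heq] at hdiff'
      have := bdd_eq_zero hBig hV (by linarith [hBf]) (by linarith [hBf])
      linarith [hBf]
    · -- f1=1 f2=1 dl=1 : V = 2^{j+1} - b
      exfalso
      have hV : (2*(b:ℤ)) ∣ 2^(j+1) - (b:ℤ) := by
        have heq : 2^(j+1) - ((1:ℤ)-1)*(x:ℤ) + (1-2*1)*(b:ℤ) = 2^(j+1) - (b:ℤ) := by ring
        rwa [heq] at hdiff'
      have := bdd_eq_zero hBig hV (by linarith [hBf]) (by linarith [hBf])
      linarith [hBf]
    · -- f1=1 f2=-1 dl=0 : V = 2^{j+1} - 2x + b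
      have hV : (2*(b:ℤ)) ∣ 2^(j+1) - 2*(x:ℤ) + (b:ℤ) := by
        have heq : 2^(j+1) - ((1:ℤ)-(-1))*(x:ℤ) + (1-2*0)*(b:ℤ)
            = 2^(j+1) - 2*(x:ℤ) + (b:ℤ) := by ring
        rwa [heq] at hdiff'
      have hV0 := bdd_eq_zero hBig hV (by linarith [hBf]) (by linarith [hBf])
      refine key ?_ (by linarith)
      have heq : 2^j * (2*(d:ℤ) - ((b:ℤ)-1)) - (1*(x:ℤ) + 0*(b:ℤ))
          = 2^j * (2*(d:ℤ) - ((b:ℤ)-1)) - (1*(x:ℤ) + 0*(b:ℤ)) := rfl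
      exact h1'
    · -- f1=1 f2=-1 dl=1 : V = 2^{j+1} - 2x - b
      have hV : (2*(b:ℤ)) ∣ 2^(j+1) - 2*(x:ℤ) - (b:ℤ) := by
        have heq : 2^(j+1) - ((1:ℤ)-(-1))*(x:ℤ) + (1-2*1)*(b:ℤ)
            = 2^(j+1) - 2*(x:ℤ) - (b:ℤ) := by ring
        rwa [heq] at hdiff'
      rcases bdd_cases hBig hV (by linarith [hBf]) (by linarith [hBf]) with hV0 | hV0 | hV0
      · exact key h1' (by linarith)
      · exfalso; linarith [hBf]
      · exfalso; linarith [hBf]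
    · -- f1=-1 f2=1 dl=0 : V = 2^{j+1} + 2x + b
      exfalso
      have hV : (2*(b:ℤ)) ∣ 2^(j+1) + 2*(x:ℤ) + (b:ℤ) := by
        have heq : 2^(j+1) - ((-1:ℤ)-1)*(x:ℤ) + (1-2*0)*(b:ℤ)
            = 2^(j+1) + 2*(x:ℤ) + (b:ℤ) := by ring
        rwa [heq] at hdiff'
      rcases bdd_cases hBig hV (by linarith [hBf]) (by linarith [hBf]) with hV0 | hV0 | hV0
      · linarith [hBf]
      · linarith [hBf]
      · linarith [hBf]
    · -- f1=-1 f2=1 dl=1 : V = 2^{j+1} + 2x - b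
      exfalso
      have hV : (2*(b:ℤ)) ∣ 2^(j+1) + 2*(x:ℤ) - (b:ℤ) := by
        have heq : 2^(j+1) - ((-1:ℤ)-1)*(x:ℤ) + (1-2*1)*(b:ℤ)
            = 2^(j+1) + 2*(x:ℤ) - (b:ℤ) := by ring
        rwa [heq] at hdiff'
      have := bdd_eq_zero hBig hV (by linarith [hBf]) (by linarith [hBf])
      linarith [hBf]
    · -- f1=-1 f2=-1 dl=0 : V = 2^{j+1} + b
      exfalso
      have hV : (2*(b:ℤ)) ∣ 2^(j+1) + (b:ℤ) := by
        have heq : 2^(j+1) - ((-1:ℤ)-(-1))*(x:ℤ) + (1-2*0)*(b:ℤ) = 2^(j+1) + (b:ℤ) := by ring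
        rwa [heq] at hdiff'
      have := bdd_eq_zero hBig hV (by linarith [hBf]) (by linarith [hBf])
      linarith [hBf]
    · -- f1=-1 f2=-1 dl=1 : V = 2^{j+1} - b
      exfalso
      have hV : (2*(b:ℤ)) ∣ 2^(j+1) - (b:ℤ) := by
        have heq : 2^(j+1) - ((-1:ℤ)-(-1))*(x:ℤ) + (1-2*1)*(b:ℤ) = 2^(j+1) - (b:ℤ) := by ring
        rwa [heq] at hdiff'
      have := bdd_eq_zero hBig hV (by linarith [hBf]) (by linarith [hBf])
      linarith [hBf]
  · -- H type
    exfalso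
    obtain ⟨g1, hg1, h1'⟩ := absorbH (natAbs_pm _) he1 h1
    obtain ⟨g2, hg2, h2'⟩ := absorbH (natAbs_pm _) he2 h2
    have hdiff := dvd_sub h1' h2'
    have hdiff' : (2*(b:ℤ)) ∣ 2^(j+1) - (g1-g2)*(5*2^r) := by
      have heq : (2^j * (2*(d:ℤ) - ((b:ℤ)-1)) - g1*(5*2^r))
          - (2^j * (2*(d:ℤ) - ((b:ℤ)+1)) - g2*(5*2^r))
          = 2^(j+1) - (g1-g2)*(5*2^r) := by ring
      rwa [heq] at hdiff
    rcases hg1 with rfl | rfl <;> rcases hg2 with rfl | rfl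
    · have hV : (2*(b:ℤ)) ∣ (2:ℤ)^(j+1) := by
        have heq : 2^(j+1) - ((1:ℤ)-1)*(5*2^r) = (2:ℤ)^(j+1) := by ring
        rwa [heq] at hdiff'
      have := bdd_eq_zero hBig hV (by linarith [hBf]) (by linarith [hBf])
      linarith
    · have hV : (2*(b:ℤ)) ∣ (2:ℤ)^(j+1) - (b:ℤ) := by
        have heq : 2^(j+1) - ((1:ℤ)-(-1))*(5*2^r) = (2:ℤ)^(j+1) - (b:ℤ) := by rw [hB2]; ring
        rwa [heq] at hdiff'
      have := bdd_eq_zero hBig hV (by linarith [hBf]) (by linarith [hBf])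
      linarith [hBf]
    · have hV : (2*(b:ℤ)) ∣ (2:ℤ)^(j+1) + (b:ℤ) := by
        have heq : 2^(j+1) - ((-1:ℤ)-1)*(5*2^r) = (2:ℤ)^(j+1) + (b:ℤ) := by rw [hB2]; ring
        rwa [heq] at hdiff'
      have := bdd_eq_zero hBig hV (by linarith [hBf]) (by linarith [hBf])
      linarith [hBf]
    · have hV : (2*(b:ℤ)) ∣ (2:ℤ)^(j+1) := by
        have heq : 2^(j+1) - ((-1:ℤ)-(-1))*(5*2^r) = (2:ℤ)^(j+1) := by ring
        rwa [heq] at hdiff'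
      have := bdd_eq_zero hBig hV (by linarith [hBf]) (by linarith [hBf])
      linarith

-- step, type (a) branch
private lemma stepA (r b x j : ℕ) (hb : b = 5*2^(r+1)) (d e : ℕ)
    (hQ : Qx b x j (2*(d:ℤ) - (b:ℤ)).natAbs (2*(e:ℤ) - (b:ℤ)).natAbs ∨
          Qh r b j (2*(d:ℤ) - (b:ℤ)).natAbs (2*(e:ℤ) - (b:ℤ)).natAbs) :
    Qx b x (j+1) d e ∨ Qh r b (j+1) d e := by
  have hBf : (b:ℤ) = 5*2^(r+1) := by rw [hb]; push_cast; ring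
  have hB2 : (b:ℤ) = 2*(5*2^r) := by rw [hBf]; ring
  rcases hQ with ⟨e1, e2, dl, he1, he2, hdl, h1, h2⟩ | ⟨e1, e2, he1, he2, h1, h2⟩
  · obtain ⟨f1, hf1, h1'⟩ := absorbX (natAbs_pm _) he1 hdl h1
    obtain ⟨f2, hf2, h2'⟩ := absorbX (natAbs_pm _) he2
      (by omega : (1-dl : ℤ) = 0 ∨ (1-dl : ℤ) = 1) h2
    rcases Int.even_or_odd (dl + 2^j) with ⟨t, ht⟩ | ⟨t, ht⟩
    · -- new dl' = 0
      refine Or.inl ⟨f1, f2, 0, hf1, hf2, Or.inl rfl, ?_, ?_⟩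
      · have h3 : (2*(b:ℤ)) ∣ (dl + 2^j)*(b:ℤ) := ⟨t, by rw [ht]; ring⟩
        have heq : 2^(j+1)*(d:ℤ) - (f1*(x:ℤ) + 0*(b:ℤ))
            = (2^j * (2*(d:ℤ) - (b:ℤ)) - (f1*(x:ℤ) + dl*(b:ℤ))) + (dl + 2^j)*(b:ℤ) := by ring
        rw [heq]; exact dvd_add h1' h3
      · have h3 : (2*(b:ℤ)) ∣ (2^j - dl)*(b:ℤ) := ⟨t - dl, by
          rw [show ((2:ℤ)^j - dl) = 2*(t - dl) from by linarith]; ring⟩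
        have heq : 2^(j+1)*(e:ℤ) - (f2*(x:ℤ) + (1-0)*(b:ℤ))
            = (2^j * (2*(e:ℤ) - (b:ℤ)) - (f2*(x:ℤ) + (1-dl)*(b:ℤ))) + (2^j - dl)*(b:ℤ) := by
          ring
        rw [heq]; exact dvd_add h2' h3
    · -- new dl' = 1
      refine Or.inl ⟨f1, f2, 1, hf1, hf2, Or.inr rfl, ?_, ?_⟩
      · have h3 : (2*(b:ℤ)) ∣ (dl + 2^j - 1)*(b:ℤ) := ⟨t, by
          rw [show (dl + (2:ℤ)^j - 1) = 2*t from by linarith]; ring⟩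
        have heq : 2^(j+1)*(d:ℤ) - (f1*(x:ℤ) + 1*(b:ℤ))
            = (2^j * (2*(d:ℤ) - (b:ℤ)) - (f1*(x:ℤ) + dl*(b:ℤ))) + (dl + 2^j - 1)*(b:ℤ) := by
          ring
        rw [heq]; exact dvd_add h1' h3
      · have h3 : (2*(b:ℤ)) ∣ (1 - dl + 2^j)*(b:ℤ) := ⟨t + 1 - dl, by
          rw [show (1 - dl + (2:ℤ)^j) = 2*(t + 1 - dl) from by linarith]; ring⟩
        have heq : 2^(j+1)*(e:ℤ) - (f2*(x:ℤ) + (1-1)*(b:ℤ))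
            = (2^j * (2*(e:ℤ) - (b:ℤ)) - (f2*(x:ℤ) + (1-dl)*(b:ℤ))) + (1 - dl + 2^j)*(b:ℤ) := by
          ring
        rw [heq]; exact dvd_add h2' h3
  · obtain ⟨g1, hg1, h1'⟩ := absorbH (natAbs_pm _) he1 h1
    obtain ⟨g2, hg2, h2'⟩ := absorbH (natAbs_pm _) he2 h2
    have key : ∀ (c : ℕ) (g : ℤ), (g = 1 ∨ g = -1) →
        ((2*(b:ℤ)) ∣ 2^j * (2*(c:ℤ) - (b:ℤ)) - g*(5*2^r)) →
        ∃ g' : ℤ, ((g' = g) ∨ (g' = -g)) ∧ ((2*(b:ℤ)) ∣ 2^(j+1) * (c:ℤ) - g'*(5*2^r)) := by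
      intro c g hg hc
      match j with
      | 0 =>
        refine ⟨-g, Or.inr rfl, ?_⟩
        obtain ⟨w, hw⟩ : ∃ w : ℤ, g + 1 = 2*w := ⟨(g+1)/2, by omega⟩
        have h3 : (2*(b:ℤ)) ∣ (g+1)*(b:ℤ) := ⟨w, by rw [hw]; ring⟩
        have heq : 2^(0+1)*(c:ℤ) - (-g)*(5*2^r)
            = (2^0 * (2*(c:ℤ) - (b:ℤ)) - g*(5*2^r)) + (g+1)*(b:ℤ) := by rw [hB2]; ring
        rw [heq]; exact dvd_add hc h3
      | jj+1 =>
        refine ⟨g, Or.inl rfl, ?_⟩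
        have h3 : (2*(b:ℤ)) ∣ (2:ℤ)^(jj+1)*(b:ℤ) := ⟨2^jj, by ring⟩
        have heq : 2^(jj+1+1)*(c:ℤ) - g*(5*2^r)
            = (2^(jj+1) * (2*(c:ℤ) - (b:ℤ)) - g*(5*2^r)) + 2^(jj+1)*(b:ℤ) := by ring
        rw [heq]; exact dvd_add hc h3
    obtain ⟨g1', hg1', hd''⟩ := key d g1 hg1 h1'
    obtain ⟨g2', hg2', he''⟩ := key e g2 hg2 h2'
    exact Or.inr ⟨g1', g2', by omega, by omega, hd'', he''⟩

private lemma Qi_base (r b x : ℕ) (hxb : x ≤ b) : Qi r b x 0 (x, b - x) := by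
  refine Or.inl ⟨1, -1, 0, Or.inl rfl, Or.inr rfl, Or.inl rfl, ⟨0, ?_⟩, ⟨0, ?_⟩⟩
  · push_cast; ring
  · show 2^0 * (((b - x : ℕ)):ℤ) - (-1*(x:ℤ) + (1-0)*(b:ℤ)) = 2*(b:ℤ)*0
    have hcast : (((b - x : ℕ)):ℤ) = (b:ℤ) - (x:ℤ) := by omega
    rw [hcast]; ring

private lemma Qi_term (r b x : ℕ) (hb : b = 5*2^(r+1)) (hnd : ¬ 2^(r+1) ∣ x) (p : ℕ × ℕ)
    (hQ : Qi r b x (r+1) p) : False := by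
  obtain ⟨c₁, c₂⟩ := p
  have hBf : (b:ℤ) = 5*2^(r+1) := by rw [hb]; push_cast; ring
  have hp1 : (2:ℤ)^(r+1) ∣ 2*(b:ℤ) := by rw [hBf]; exact ⟨10, by ring⟩
  rcases hQ with ⟨e1, e2, dl, he1, he2, hdl, h1, h2⟩ | ⟨e1, e2, he1, he2, h1, h2⟩
  · have hp2 : (2:ℤ)^(r+1) ∣ 2^(r+1) * (((c₁,c₂).1:ℕ):ℤ) := dvd_mul_right _ _
    have hp3 : (2:ℤ)^(r+1) ∣ dl*(b:ℤ) := Dvd.dvd.mul_left (by rw [hBf]; exact ⟨5, by ring⟩) dl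
    have h4 := dvd_trans hp1 h1
    have hx' : (2:ℤ)^(r+1) ∣ e1*(x:ℤ) := by
      have heq : e1*(x:ℤ) = 2^(r+1) * (((c₁,c₂).1:ℕ):ℤ)
          - (2^(r+1) * (((c₁,c₂).1:ℕ):ℤ) - (e1*(x:ℤ) + dl*(b:ℤ))) - dl*(b:ℤ) := by ring
      rw [heq]; exact dvd_sub (dvd_sub hp2 h4) hp3
    have hx2 : (2:ℤ)^(r+1) ∣ (x:ℤ) := by
      rcases he1 with rfl | rfl
      · simpa using hx'
      · have h5 : (2:ℤ)^(r+1) ∣ -(x:ℤ) := by simpa [neg_one_mul] using hx'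
        exact (dvd_neg).mp h5
    exact hnd (by exact_mod_cast hx2)
  · have h4 := dvd_trans hp1 h1
    have hp2 : (2:ℤ)^(r+1) ∣ 2^(r+1) * (((c₁,c₂).1:ℕ):ℤ) := dvd_mul_right _ _
    have hx' : (2:ℤ)^(r+1) ∣ e1*(5*2^r) := by
      have heq : e1*(5*2^r:ℤ) = 2^(r+1) * (((c₁,c₂).1:ℕ):ℤ)
          - (2^(r+1) * (((c₁,c₂).1:ℕ):ℤ) - e1*(5*2^r)) := by ring
      rw [heq]; exact dvd_sub hp2 h4
    have hx2 : (2:ℤ)^(r+1) ∣ (5*2^r:ℤ) := by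
      rcases he1 with rfl | rfl
      · simpa using hx'
      · have h5 : (2:ℤ)^(r+1) ∣ -(5*2^r:ℤ) := by simpa [neg_one_mul] using hx'
        exact (dvd_neg).mp h5
    obtain ⟨t, ht⟩ := hx2
    have h2 : ((2:ℤ)^r) ≠ 0 := pow_ne_zero _ two_ne_zero
    have ht' : (2:ℤ)^r * 5 = 2^r * (2*t) := by
      calc (2:ℤ)^r * 5 = 5*2^r := by ring
      _ = 2^(r+1)*t := ht
      _ = 2^r * (2*t) := by ring
    have := mul_left_cancel₀ h2 (by linarith : (2:ℤ)^r * 5 = 2^r * (2*t))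
    omega

private lemma step_main (r b x : ℕ) (hb : b = 5*2^(r+1)) (hx1 : 5*2^r ≤ x) (hx2 : x ≤ b - 1)
    (j : ℕ) (hj : j ≤ r) (p : ℕ × ℕ) (hp : IsDiffPair b p)
    (hQ : Qi r b x j (Kpair b p)) : Qi r b x (j+1) p := by
  obtain ⟨d, e⟩ := p
  obtain ⟨hde, hdb⟩ := hp
  simp only at hde hdb
  rw [Kpair] at hQ
  simp only at hQ
  split_ifs at hQ with h0 hc htb
  · exact (step0 r b x j hb hx1 hx2 hQ).elim
  · exact (stepC r b x j hb hj d (by omega) (by omega) (Qi_sort hQ)).elim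
  · exact stepB r b x j hb hx1 hx2 hj d e (by omega) (Qi_sort hQ)
  · exact stepA r b x j hb d e (Qi_sort hQ)

private lemma Kpair_diff (b : ℕ) (p : ℕ × ℕ) (hb : 2 ≤ b) (hp : IsDiffPair b p) :
    IsDiffPair b (Kpair b p) := by
  obtain ⟨d, e⟩ := p
  have h1 : e ≤ d := hp.1
  have h2 : d ≤ b - 1 := hp.2
  rw [Kpair]
  split_ifs with h0 hc htb
  · exact ⟨Nat.le_refl 0, Nat.zero_le _⟩
  · have h0' : ¬(d = 0 ∧ e = 0) := h0
    have hc' : e = 0 := hc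
    exact ⟨min_le_max, max_le (by omega : d - 1 ≤ b - 1) (by omega : b - d ≤ b - 1)⟩
  · have hc' : ¬ e = 0 := hc
    exact ⟨min_le_max, max_le
      (by omega : (2*(d:ℤ) - ((b:ℤ)-1)).natAbs ≤ b - 1)
      (by omega : (2*(d:ℤ) - ((b:ℤ)+1)).natAbs ≤ b - 1)⟩
  · have hc' : ¬ e = 0 := hc
    exact ⟨min_le_max, max_le
      (by omega : (2*(d:ℤ) - (b:ℤ)).natAbs ≤ b - 1)
      (by omega : (2*(e:ℤ) - (b:ℤ)).natAbs ≤ b - 1)⟩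

private lemma Kpair_iter_diff (b : ℕ) (hb : 2 ≤ b) :
    ∀ (m : ℕ) (p : ℕ × ℕ), IsDiffPair b p → IsDiffPair b ((Kpair b)^[m] p) := by
  intro m
  induction m with
  | zero => intro p hp; simpa using hp
  | succ m ih =>
    intro p hp
    rw [Function.iterate_succ_apply]
    exact ih _ (Kpair_diff b p hb hp)

private lemma chain_lemma (r b x : ℕ) (hb : b = 5*2^(r+1)) (hx1 : 5*2^r ≤ x)
    (hx2 : x ≤ b - 1) (hb2 : 2 ≤ b) :
    ∀ j, j ≤ r + 1 → ∀ p : ℕ × ℕ, IsDiffPair b p →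
      (Kpair b)^[j] p = (x, b - x) → Qi r b x j p := by
  intro j
  induction j with
  | zero =>
    intro _ p _ hit
    rw [Function.iterate_zero_apply] at hit
    rw [hit]
    exact Qi_base r b x (by omega)
  | succ j ih =>
    intro hj p hp hit
    rw [Function.iterate_succ_apply] at hit
    exact step_main r b x hb hx1 hx2 j (by omega) p hp
      (ih (by omega) _ (Kpair_diff b p hb2 hp) hit)


/-- chains above a pair `(x, b - x)` with `2^n ∤ x` have length
at most `n - 1` when `b = 5·2^n`. -/
theorem kaprekar_above_type_b (n b x u v L : ℕ) (hn : 2 ≤ n)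
    (hb : b = 5 * 2 ^ n) (hx1 : b / 2 ≤ x) (hx : x ≤ b - 1) (hnd : ¬ 2 ^ n ∣ x)
    (huv : IsDiffPair b (u, v)) (hK : (Kpair b)^[L] (u, v) = (x, b - x)) :
    L ≤ n - 1 := by
  obtain ⟨r, rfl⟩ : ∃ r, n = r + 1 := ⟨n - 1, by omega⟩
  by_contra hcon
  have hb2 : 2 ≤ b := by
    rw [hb]
    have h1 : 1 ≤ 2^(r+1) := Nat.one_le_two_pow
    omega
  have hx1' : 5*2^r ≤ x := by
    have hdiv : b / 2 = 5*2^r := by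
      rw [hb, pow_succ]
      omega
    omega
  have hsplit : (Kpair b)^[r+1] ((Kpair b)^[L-(r+1)] (u, v)) = (x, b - x) := by
    rw [← Function.iterate_add_apply]
    rw [show (r+1) + (L - (r+1)) = L from by omega]
    exact hK
  have hw := Kpair_iter_diff b hb2 (L-(r+1)) (u,v) huv
  have hQ := chain_lemma r b x hb hx1' hx hb2 (r+1) (le_refl _) _ hw hsplit
  exact (Qi_term r b x hb hnd _ hQ).elim
end

section
/- Let b > 4 be divisible by 4. Then: (i) for every base-b difference pair (u, v), K(u, v) = (1, 1) if and only if (u, v) = (b/2, b/2); (ii) there is no base-b difference pair (u, v) with K(u, v) = (b/2, b/2); (iii) for every x ≥ 2, there is no base-b difference pair (u, v) with K(u, v) = (x, x); and (iv) for every base-b difference pair (u, v), K(u, v) = (b − 1, 0) if and only if (u, v) = (1, 0). -/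
lemma no_xx (b : ℕ) (hb : 4 < b) (h4 : 4 ∣ b) (x : ℕ) (hx : 2 ≤ x) (u v : ℕ)
    (h : IsDiffPair b (u, v)) : Kpair b (u, v) ≠ (x, x) := by
  obtain ⟨h1, h2⟩ := h
  simp only [Kpair, sort2]
  split_ifs with h0 hc hbc
  · intro heq; rw [Prod.mk.injEq] at heq; omega
  · intro heq; rw [Prod.mk.injEq] at heq; omega
  · intro heq; rw [Prod.mk.injEq] at heq; omega
  · intro heq; rw [Prod.mk.injEq] at heq
    simp only [not_and, not_or] at h0 hc hbc
    omega

/-- predecessors of `(1,1)`, `(b/2, b/2)`, `(x,x)` for `x ≥ 2`,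
and `(b-1, 0)` when `4 ∣ b` and `b > 4`. -/
theorem kaprekar_special_predecessors (b : ℕ) (hb : 4 < b) (h4 : 4 ∣ b) :
    (∀ u v : ℕ, IsDiffPair b (u, v) →
      (Kpair b (u, v) = (1, 1) ↔ (u, v) = (b / 2, b / 2))) ∧
    (¬ ∃ u v : ℕ, IsDiffPair b (u, v) ∧ Kpair b (u, v) = (b / 2, b / 2)) ∧
    (∀ x : ℕ, 2 ≤ x →
      ¬ ∃ u v : ℕ, IsDiffPair b (u, v) ∧ Kpair b (u, v) = (x, x)) ∧
    (∀ u v : ℕ, IsDiffPair b (u, v) →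
      (Kpair b (u, v) = (b - 1, 0) ↔ (u, v) = (1, 0))) := by
  refine ⟨?_, ?_, ?_, ?_⟩
  · intro u v ⟨h1, h2⟩
    constructor
    · simp only [Kpair, sort2]
      split_ifs with h0 hc hbc
      · intro heq; rw [Prod.mk.injEq] at heq ⊢; omega
      · intro heq; rw [Prod.mk.injEq] at heq ⊢; omega
      · intro heq; rw [Prod.mk.injEq] at heq ⊢; omega
      · intro heq; rw [Prod.mk.injEq] at heq ⊢
        simp only [not_and, not_or] at h0 hc hbc
        omega
    · intro heq
      rw [Prod.mk.injEq] at heq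
      obtain ⟨hu, hv⟩ := heq
      subst hu hv
      simp only [Kpair, sort2]
      split_ifs with h0 hc hbc
      · exfalso; omega
      · exfalso; omega
      · rw [Prod.mk.injEq]; omega
      · exfalso; omega
  · rintro ⟨u, v, hp, heq⟩
    exact no_xx b hb h4 (b / 2) (by omega) u v hp heq
  · rintro x hx ⟨u, v, hp, heq⟩
    exact no_xx b hb h4 x hx u v hp heq
  · intro u v ⟨h1, h2⟩
    constructor
    · simp only [Kpair, sort2]
      split_ifs with h0 hc hbc
      · intro heq; rw [Prod.mk.injEq] at heq ⊢; omega
      · intro heq; rw [Prod.mk.injEq] at heq ⊢; omega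
      · intro heq; rw [Prod.mk.injEq] at heq ⊢; omega
      · intro heq; rw [Prod.mk.injEq] at heq ⊢
        simp only [not_and, not_or] at h0 hc hbc
        omega
    · intro heq
      rw [Prod.mk.injEq] at heq
      obtain ⟨hu, hv⟩ := heq
      subst hu hv
      simp [Kpair, sort2, Prod.ext_iff]
end

section
/- Let b = 5·2^n with n ≥ 2. For every integer t with 2 ≤ t ≤ n + 2, K^t((b/2, b/2)) = (b − 2^{t−2}, b − 3·2^{t−2}); in particular, K^{n+2}((b/2, b/2)) = (4b/5, 2b/5). -/
/-! The pair `(b/2, b/2)` is of type (b) and is sent to `(1, 1)`, which is sent to `(b - 1, b - 3)`.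
From then on every pair `(b - c, b - 3c)` with `6c < b` is of type (a), and `K` maps it to
`(b - 2c, b - 6c)`: the trajectory just doubles `c`, starting from `c = 1`, until `c = 2^n`. -/

lemma Kpair_of_eq {b d : ℕ} (hd : 0 < d) :
    Kpair b (d, d) = sort2 ((2 * (d : ℤ) - ((b : ℤ) - 1)).natAbs,
      (2 * (d : ℤ) - ((b : ℤ) + 1)).natAbs) := by
  simp [Kpair, hd.ne']

lemma Kpair_of_typeA {b d d' : ℕ} (hd' : 0 < d') (hlt : d' < d) (hsum : d + d' ≠ b) :
    Kpair b (d, d') = sort2 ((2 * (d : ℤ) - b).natAbs, (2 * (d' : ℤ) - b).natAbs) := by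
  simp [Kpair, hd'.ne', hlt.ne', hsum]

lemma Kpair_half_half {b : ℕ} (hb : 0 < b) (heven : 2 ∣ b) : Kpair b (b / 2, b / 2) = (1, 1) := by
  rw [Kpair_of_eq (by omega)]
  simp only [sort2, Prod.mk.injEq]
  omega

lemma Kpair_one_one {b : ℕ} (hb : 3 ≤ b) : Kpair b (1, 1) = (b - 1, b - 3) := by
  rw [Kpair_of_eq one_pos]
  simp only [sort2, Prod.mk.injEq]
  omega

lemma Kpair_sub_sub {b c : ℕ} (hc : 0 < c) (hcb : 6 * c < b) :
    Kpair b (b - c, b - 3 * c) = (b - 2 * c, b - 3 * (2 * c)) := by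
  rw [Kpair_of_typeA (by omega) (by omega) (by omega)]
  simp only [sort2, Prod.mk.injEq]
  omega

lemma iterate_Kpair_sub_sub {b c : ℕ} (hc : 0 < c) (s : ℕ) (hcb : 3 * 2 ^ s * c < b) :
    (Kpair b)^[s] (b - c, b - 3 * c) = (b - 2 ^ s * c, b - 3 * (2 ^ s * c)) := by
  induction s with
  | zero => simp
  | succ s ih =>
    have hcb' : 6 * (2 ^ s * c) < b := by rw [pow_succ] at hcb; linarith
    rw [Function.iterate_succ_apply', ih (by linarith), Kpair_sub_sub (by positivity) hcb',
      pow_succ, mul_comm _ 2, mul_assoc]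

/-- the trajectory of `(b/2, b/2)` for `b = 5·2^n`, `n ≥ 2`. -/
theorem kaprekar_trajectory_half_half (n b : ℕ) (hn : 2 ≤ n)
    (hb : b = 5 * 2 ^ n) :
    (∀ t : ℕ, 2 ≤ t → t ≤ n + 2 →
      (Kpair b)^[t] (b / 2, b / 2) = (b - 2 ^ (t - 2), b - 3 * 2 ^ (t - 2))) ∧
    (Kpair b)^[n + 2] (b / 2, b / 2) = (4 * b / 5, 2 * b / 5) := by
  have hpow : 0 < 2 ^ n := by positivity
  have heven : 2 ∣ b := hb ▸ dvd_mul_of_dvd_right (dvd_pow_self 2 (by omega)) 5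
  have trajectory : ∀ s ≤ n,
      (Kpair b)^[s + 2] (b / 2, b / 2) = (b - 2 ^ s, b - 3 * 2 ^ s) := by
    intro s hs
    have hgrowth : 3 * 2 ^ s * 1 < b := by
      have := Nat.pow_le_pow_right two_pos hs
      omega
    rw [Function.iterate_add_apply, Function.iterate_succ_apply, Function.iterate_one,
      Kpair_half_half (by omega) heven, Kpair_one_one (by omega)]
    simpa using iterate_Kpair_sub_sub one_pos s hgrowth
  refine ⟨fun t ht htn => ?_, ?_⟩
  · obtain ⟨s, rfl⟩ := Nat.exists_eq_add_of_le' ht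
    simpa using trajectory s (by omega)
  · rw [trajectory n le_rfl]
    simp only [Prod.mk.injEq]
    omega
end

section
/- Let b = 5·2^n with n ≥ 2. For every integer t with 1 ≤ t ≤ n + 1, K^t((1, 1)) = (b − 2^{t−1}, b − 3·2^{t−1}). -/
lemma kap_base (b : ℕ) (hb : 5 ≤ b) : Kpair b (1, 1) = (b - 1, b - 3) := by
  unfold Kpair sort2
  rw [if_neg (by simp), if_neg (by simp), if_pos (by left; rfl)]
  simp only [Prod.mk.injEq]
  constructor <;> omega

lemma kap_step (c a : ℕ) (ha : 1 ≤ a) (hc : 2 * a ≤ c) :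
    Kpair (5 * c) (5 * c - a, 5 * c - 3 * a) = (5 * c - 2 * a, 5 * c - 6 * a) := by
  unfold Kpair sort2
  rw [if_neg (by simp only []; omega), if_neg (by simp only []; omega),
      if_neg (by simp only []; omega)]
  simp only [Prod.mk.injEq]
  constructor <;> omega

/-- the trajectory of `(1, 1)` for `b = 5·2^n`, `n ≥ 2`. -/
theorem kaprekar_trajectory_one_one (n b : ℕ) (hn : 2 ≤ n)
    (hb : b = 5 * 2 ^ n) :
    ∀ t : ℕ, 1 ≤ t → t ≤ n + 1 →
      (Kpair b)^[t] (1, 1) = (b - 2 ^ (t - 1), b - 3 * 2 ^ (t - 1)) := by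
  subst hb
  intro t ht1 ht2
  induction t with
  | zero => omega
  | succ t ih =>
    rcases Nat.lt_or_ge 1 (t + 1) with h1 | h1
    · have ht : 1 ≤ t := by omega
      rw [Function.iterate_succ_apply', ih ht (by omega)]
      obtain ⟨k, hk⟩ : ∃ k, t = k + 1 := ⟨t - 1, by omega⟩
      subst hk
      have hpow : 2 * 2 ^ k ≤ 2 ^ n := by
        calc 2 * 2 ^ k = 2 ^ (k + 1) := (pow_succ 2 k).symm ▸ by ring
        _ ≤ 2 ^ n := Nat.pow_le_pow_right (by norm_num) (by omega)
      have := kap_step (2 ^ n) (2 ^ k) (Nat.one_le_two_pow) hpow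
      simp only [Nat.add_sub_cancel] at *
      rw [this]
      have h2 : 2 ^ (k + 1) = 2 * 2 ^ k := by rw [pow_succ]; ring
      rw [h2]
      simp only [Prod.mk.injEq]
      exact ⟨trivial, by omega⟩
    · have ht0 : t = 0 := by omega
      subst ht0
      simp only [zero_add, Function.iterate_one, Nat.add_sub_cancel, pow_zero]
      have hb5 : 5 ≤ 5 * 2 ^ n := by nlinarith [Nat.one_le_two_pow (n := n)]
      rw [kap_base _ hb5]
      norm_num
end

section
/- Let b = 5m·2^n with m > 1 odd and n ≥ 0. Then every base-b difference pair (u, v) for which K^t(u, v) = (3b/5, b/5) for some t ≥ 0 satisfies u > v > 0, u + v ≠ b, and m divides both u and v; moreover, the number of such pairs (u, v) is exactly 4^{n+1}. -/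
namespace KapAux18


def g5 (N z : ℕ) : ℕ := (2 * (z : ℤ) - (N : ℤ)).natAbs

def ZC (N y1 y2 : ℕ) : Prop :=
  0 < y2 ∧ y2 < y1 ∧ y1 < N ∧ ((y1 * y2) % 5 = 2 ∨ (y1 * y2) % 5 = 3)

lemma mod5_iff (x : ℕ) :
    (x % 5 = 2 ∨ x % 5 = 3) ↔ ((x : ZMod 5) = 2 ∨ (x : ZMod 5) = 3) := by
  have hv : (x : ZMod 5).val = x % 5 := ZMod.val_natCast 5 x
  constructor
  · rintro (h | h) <;> [left; right] <;>
      · rw [← ZMod.natCast_mod x 5, h]; decide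
  · rintro (h | h) <;> [left; right] <;>
      · rw [← hv, h]; decide

lemma g5_cast {N : ℕ} (hN : 5 ∣ N) (z : ℕ) :
    ((g5 N z : ℕ) : ZMod 5) = 2 * (z : ZMod 5) ∨
    ((g5 N z : ℕ) : ZMod 5) = -(2 * (z : ZMod 5)) := by
  obtain ⟨k, rfl⟩ := hN
  rcases Int.natAbs_eq (2 * (z : ℤ) - ((5 * k : ℕ) : ℤ)) with h | h
  · left
    have h3 : ((g5 (5 * k) z : ℕ) : ZMod 5)
        = ((2 * (z : ℤ) - ((5 * k : ℕ) : ℤ) : ℤ) : ZMod 5) := by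
      unfold g5; rw [← Int.cast_natCast, ← h]
    rw [h3]; push_cast
    rw [show ((5 : ZMod 5)) = 0 by decide]; ring
  · right
    have h3 : ((g5 (5 * k) z : ℕ) : ZMod 5)
        = -((2 * (z : ℤ) - ((5 * k : ℕ) : ℤ) : ℤ) : ZMod 5) := by
      unfold g5; rw [← Int.cast_natCast, ← neg_eq_iff_eq_neg.mpr h, Int.cast_neg]
    rw [h3]; push_cast
    rw [show ((5 : ZMod 5)) = 0 by decide]; ring

lemma prod5 (w1 w2 y1 y2 : ZMod 5)
    (h1 : w1 = 2 * y1 ∨ w1 = -(2 * y1)) (h2 : w2 = 2 * y2 ∨ w2 = -(2 * y2)) :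
    (w1 * w2 = 2 ∨ w1 * w2 = 3) ↔ (y1 * y2 = 2 ∨ y1 * y2 = 3) := by
  rcases h1 with rfl | rfl <;> rcases h2 with rfl | rfl <;> revert y1 y2 <;> decide

lemma ZC_facts {N y1 y2 : ℕ} (h : ZC N y1 y2) :
    y1 % 5 ≠ 0 ∧ y2 % 5 ≠ 0 ∧ (y1 + y2) % 5 ≠ 0 := by
  obtain ⟨h0, h12, h1N, hp⟩ := h
  rw [Nat.mul_mod] at hp
  have a1 : y1 % 5 < 5 := Nat.mod_lt _ (by norm_num)
  have a2 : y2 % 5 < 5 := Nat.mod_lt _ (by norm_num)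
  have s : (y1 + y2) % 5 = (y1 % 5 + y2 % 5) % 5 := Nat.add_mod _ _ _
  set a := y1 % 5 with ha
  set c := y2 % 5 with hc
  interval_cases a <;> interval_cases c <;> omega

lemma g5_facts {N z : ℕ} (hN5 : N % 5 = 0) (h0 : 0 < z) (h1 : z < N) (h5 : z % 5 ≠ 0) :
    0 < g5 N z ∧ g5 N z < N ∧ g5 N z % 5 ≠ 0 := by
  have hz5 : 2 * z ≠ N := by intro h; omega
  unfold g5; omega



lemma mul_sort (m a c : ℕ) : sort2 (m * a, m * c) = (m * max a c, m * min a c) := by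
  rcases le_total a c with h | h
  · have h' : m * a ≤ m * c := Nat.mul_le_mul_left m h
    simp [sort2, max_eq_right h, min_eq_left h, max_eq_right h', min_eq_left h']
  · have h' : m * c ≤ m * a := Nat.mul_le_mul_left m h
    simp [sort2, max_eq_left h, min_eq_right h, max_eq_left h', min_eq_right h']

lemma natAbs_factor (m u b N z : ℕ) (hb : b = m * N) (hu : u = m * z) :
    (2 * (u : ℤ) - (b : ℤ)).natAbs = m * g5 N z := by
  have h : (2 * (u : ℤ) - (b : ℤ)) = (m : ℤ) * (2 * (z : ℤ) - (N : ℤ)) := by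
    rw [hb, hu]; push_cast; ring
  rw [h, Int.natAbs_mul, Int.natAbs_natCast, g5]

lemma step {m n N b : ℕ} (hm1 : 1 < m) (hN : N = 5 * 2 ^ n) (hb : b = m * N)
    {y1 y2 : ℕ} (h : ZC N y1 y2) :
    Kpair b (m * y1, m * y2)
      = (m * max (g5 N y1) (g5 N y2), m * min (g5 N y1) (g5 N y2)) ∧
    ZC N (max (g5 N y1) (g5 N y2)) (min (g5 N y1) (g5 N y2)) := by
  obtain ⟨h0, h12, h1N, hp⟩ := h
  obtain ⟨f1, f2, f3⟩ := ZC_facts ⟨h0, h12, h1N, hp⟩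
  have hm0 : 0 < m := by omega
  have hN5 : N % 5 = 0 := by omega
  have hsum : y1 + y2 ≠ N := by intro hE; omega
  obtain ⟨g11, g12, g13⟩ := g5_facts hN5 (by omega) h1N f1
  obtain ⟨g21, g22, g23⟩ := g5_facts hN5 h0 (by omega) f2
  have hne : g5 N y1 ≠ g5 N y2 := by
    unfold g5; intro hE; omega
  have hKeval : Kpair b (m * y1, m * y2)
      = (m * max (g5 N y1) (g5 N y2), m * min (g5 N y1) (g5 N y2)) := by
    unfold Kpair
    have hy2 : m * y2 ≠ 0 := Nat.mul_ne_zero (by omega) (by omega)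
    rw [if_neg (fun hE => hy2 hE.2), if_neg hy2,
      if_neg (by
        push_neg
        constructor
        · intro hE; exact absurd (Nat.eq_of_mul_eq_mul_left hm0 hE).symm (Nat.ne_of_lt h12)
        · rw [hb, ← Nat.mul_add]; intro hE
          exact hsum (Nat.eq_of_mul_eq_mul_left hm0 hE))]
    dsimp only
    rw [natAbs_factor m (m*y1) b N y1 hb rfl, natAbs_factor m (m*y2) b N y2 hb rfl,
      mul_sort]
  refine ⟨hKeval, by omega, by omega, by omega, ?_⟩
  have hmm : max (g5 N y1) (g5 N y2) * min (g5 N y1) (g5 N y2) = g5 N y1 * g5 N y2 := by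
    rcases le_total (g5 N y1) (g5 N y2) with h | h <;>
      simp [max_eq_left, max_eq_right, min_eq_left, min_eq_right, h, Nat.mul_comm]
  rw [hmm, mod5_iff, Nat.cast_mul]
  rw [mod5_iff, Nat.cast_mul] at hp
  exact (prod5 _ _ _ _ (g5_cast ⟨2^n, hN⟩ y1) (g5_cast ⟨2^n, hN⟩ y2)).mpr hp



lemma g5_term {n N : ℕ} (hN : N = 5 * 2 ^ n) :
    ∀ k z, 0 < z → z < N → z % 5 ≠ 0 → 2 ^ (n - k) ∣ z →
      (g5 N)^[k + 1] z = 2 ^ n ∨ (g5 N)^[k + 1] z = 3 * 2 ^ n := by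
  intro k
  induction k with
  | zero =>
    intro z h0 h1 h5 hd
    rw [Nat.sub_zero] at hd
    obtain ⟨y, rfl⟩ := hd
    have hy4 : y < 5 := by
      by_contra hy
      push_neg at hy
      have : 5 * 2 ^ n ≤ 2 ^ n * y := by
        calc 5 * 2 ^ n = 2 ^ n * 5 := by ring
          _ ≤ 2 ^ n * y := Nat.mul_le_mul_left _ hy
      omega
    have hy0 : 0 < y := by
      rcases Nat.eq_zero_or_pos y with h | h
      · subst h; simp at h0
      · exact h
    have key : g5 N (2 ^ n * y) = 2 ^ n * (2 * (y : ℤ) - 5).natAbs := by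
      have hE : (2 * ((2 ^ n * y : ℕ) : ℤ) - (N : ℤ))
          = ((2 ^ n : ℕ) : ℤ) * (2 * (y : ℤ) - 5) := by
        rw [hN]; push_cast; ring
      rw [g5, hE, Int.natAbs_mul, Int.natAbs_natCast]
    simp only [zero_add, Function.iterate_one]
    interval_cases y <;> rw [key] <;> norm_num <;> omega
  | succ k ih =>
    intro z h0 h1 h5 hd
    have hN5 : N % 5 = 0 := by omega
    obtain ⟨G1, G2, G3⟩ := g5_facts hN5 h0 h1 h5
    have h1' : n - k ≤ (n - (k + 1)) + 1 := by omega
    have h2 : (2 ^ (n - k) : ℕ) ∣ 2 * z := by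
      have hstep : (2 ^ (n - k) : ℕ) ∣ 2 ^ ((n - (k+1)) + 1) := pow_dvd_pow 2 h1'
      refine hstep.trans ?_
      obtain ⟨c, hc⟩ := hd
      exact ⟨c, by rw [hc, pow_succ]; ring⟩
    have h3 : (2 ^ (n - k) : ℕ) ∣ N := by
      rw [hN]
      exact Dvd.dvd.mul_left (pow_dvd_pow 2 (by omega : n - k ≤ n)) 5
    have h2' : ((2 ^ (n - k) : ℕ) : ℤ) ∣ 2 * (z : ℤ) := by
      have := Int.natCast_dvd_natCast.mpr h2; push_cast at this; exact_mod_cast this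
    have h3' : ((2 ^ (n - k) : ℕ) : ℤ) ∣ (N : ℤ) := Int.natCast_dvd_natCast.mpr h3
    have hZ : ((2 ^ (n - k) : ℕ) : ℤ) ∣ (2 * (z : ℤ) - (N : ℤ)) := dvd_sub h2' h3'
    have hdvd : 2 ^ (n - k) ∣ g5 N z := by
      have h6 := Int.natAbs_dvd_natAbs.mpr hZ
      rw [Int.natAbs_natCast] at h6
      exact h6
    have := ih (g5 N z) G1 G2 G3 hdvd
    rwa [← Function.iterate_succ_apply] at this


lemma iterKp {m n N b : ℕ} (hm1 : 1 < m) (hN : N = 5 * 2 ^ n) (hb : b = m * N) :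
    ∀ t y1 y2, ZC N y1 y2 →
    ∃ w1 w2, ZC N w1 w2 ∧ (Kpair b)^[t] (m * y1, m * y2) = (m * w1, m * w2) ∧
      ((w1 = (g5 N)^[t] y1 ∧ w2 = (g5 N)^[t] y2) ∨
       (w1 = (g5 N)^[t] y2 ∧ w2 = (g5 N)^[t] y1)) := by
  intro t
  induction t with
  | zero => exact fun y1 y2 h => ⟨y1, y2, h, rfl, Or.inl ⟨rfl, rfl⟩⟩
  | succ t ih =>
    intro y1 y2 h
    obtain ⟨w1, w2, hw, hK, hrel⟩ := ih y1 y2 h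
    obtain ⟨hstep, hZC⟩ := step hm1 hN hb hw
    refine ⟨max (g5 N w1) (g5 N w2), min (g5 N w1) (g5 N w2), hZC, ?_, ?_⟩
    · rw [Function.iterate_succ_apply', hK, hstep]
    · rcases hrel with ⟨e1, e2⟩ | ⟨e1, e2⟩ <;>
        rw [Function.iterate_succ_apply', Function.iterate_succ_apply', ← e1, ← e2] <;>
        omega

lemma forwardKp {m n N b : ℕ} (hm1 : 1 < m) (hN : N = 5 * 2 ^ n) (hb : b = m * N)
    {y1 y2 : ℕ} (h : ZC N y1 y2) :
    (Kpair b)^[n + 1] (m * y1, m * y2) = (m * (3 * 2 ^ n), m * 2 ^ n) := by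
  obtain ⟨w1, w2, hw, hK, hrel⟩ := iterKp hm1 hN hb (n + 1) y1 y2 h
  obtain ⟨f1, f2, f3⟩ := ZC_facts h
  obtain ⟨h0, h12, h1N, hp⟩ := h
  have d1 : 2 ^ (n - n) ∣ y1 := by simp
  have d2 : 2 ^ (n - n) ∣ y2 := by simp
  have t1 := g5_term hN n y1 (by omega) h1N f1 d1
  have t2 := g5_term hN n y2 h0 (by omega) f2 d2
  have hw12 : w2 < w1 := hw.2.1
  have hval : w1 = 3 * 2 ^ n ∧ w2 = 2 ^ n := by
    have hpos : 0 < 2 ^ n := Nat.pow_pos (by norm_num)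
    rcases hrel with ⟨e1, e2⟩ | ⟨e1, e2⟩ <;> omega
  rw [hK, hval.1, hval.2]

lemma ZCF {n N : ℕ} (hN : N = 5 * 2 ^ n) : ZC N (3 * 2 ^ n) (2 ^ n) := by
  have hpos : 0 < 2 ^ n := Nat.pow_pos (by norm_num)
  refine ⟨hpos, by omega, by omega, ?_⟩
  rw [mod5_iff]
  push_cast
  have h4 : (2 : ZMod 5) ^ n * (2 : ZMod 5) ^ n = (-1 : ZMod 5) ^ n := by
    rw [← mul_pow, show ((2 : ZMod 5) * 2) = -1 from by decide]
  rcases Nat.even_or_odd n with h | h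
  · right
    rw [mul_assoc, h4, h.neg_one_pow]; norm_num
  · left
    rw [mul_assoc, h4, h.neg_one_pow]; decide

lemma DPstep {b : ℕ} (hb2 : 2 ≤ b) {p : ℕ × ℕ} (h : p.2 ≤ p.1 ∧ p.1 ≤ b - 1) :
    (Kpair b p).2 ≤ (Kpair b p).1 ∧ (Kpair b p).1 ≤ b - 1 := by
  obtain ⟨u, v⟩ := p
  unfold Kpair sort2
  dsimp only at h ⊢
  split_ifs <;> dsimp only <;> omega


lemma dvd_of_int (m : ℕ) (x : ℤ) (h : m ∣ x.natAbs) : (m : ℤ) ∣ x :=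
  Int.dvd_natAbs.mp (Int.natCast_dvd_natCast.mpr h)

lemma back_step {m n N b : ℕ} (hm : Odd m) (hm1 : 1 < m) (hN : N = 5 * 2 ^ n)
    (hb : b = m * N) {p : ℕ × ℕ} (hdp : p.2 ≤ p.1 ∧ p.1 ≤ b - 1)
    {y1 y2 : ℕ} (hZ : ZC N y1 y2) (hK : Kpair b p = (m * y1, m * y2)) :
    ∃ z1 z2, ZC N z1 z2 ∧ p = (m * z1, m * z2) := by
  obtain ⟨u, v⟩ := p
  have hm0 : 0 < m := by omega
  have hNpos : 0 < N := by rw [hN]; positivity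
  have hbpos : 0 < b := by rw [hb]; positivity
  have hmb : (m : ℤ) ∣ (b : ℤ) := ⟨N, by exact_mod_cast hb⟩
  have hy2pos : 0 < m * y2 := Nat.mul_pos hm0 hZ.1
  have hy1pos : 0 < m * y1 := Nat.mul_pos hm0 (by have := hZ.1; have := hZ.2.1; omega)
  unfold Kpair sort2 at hK
  dsimp only at hK hdp
  split_ifs at hK with hA hB hC <;> rw [Prod.mk.injEq] at hK
  · omega
  · -- type (c) : v = 0, u ≠ 0 : impossible
    exfalso
    have hu0 : u ≠ 0 := fun h => hA ⟨h, hB⟩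
    have e1 : u - 1 = m * y1 ∨ u - 1 = m * y2 := by omega
    have e2 : b - u = m * y1 ∨ b - u = m * y2 := by omega
    have d1 : m ∣ u - 1 := by rcases e1 with h | h <;> exact ⟨_, h⟩
    have d2 : m ∣ b - u := by rcases e2 with h | h <;> exact ⟨_, h⟩
    have d3 : m ∣ b := ⟨N, hb⟩
    have d4 : m ∣ (u - 1) + (b - u) := Nat.dvd_add d1 d2
    have e3 : (u - 1) + (b - u) = b - 1 := by omega
    rw [e3] at d4
    have d5 : m ∣ b - (b - 1) := Nat.dvd_sub d3 d4
    rw [show b - (b - 1) = 1 by omega] at d5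
    exact absurd (Nat.dvd_one.mp d5) (by omega)
  · -- type (b) : impossible
    exfalso
    have e1 : (2 * (u:ℤ) - ((b:ℤ) - 1)).natAbs = m * y1 ∨
        (2 * (u:ℤ) - ((b:ℤ) - 1)).natAbs = m * y2 := by omega
    have e2 : (2 * (u:ℤ) - ((b:ℤ) + 1)).natAbs = m * y1 ∨
        (2 * (u:ℤ) - ((b:ℤ) + 1)).natAbs = m * y2 := by omega
    have d1 : (m:ℤ) ∣ (2 * (u:ℤ) - ((b:ℤ) - 1)) := by
      apply dvd_of_int; rcases e1 with h | h <;> exact ⟨_, h⟩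
    have d2 : (m:ℤ) ∣ (2 * (u:ℤ) - ((b:ℤ) + 1)) := by
      apply dvd_of_int; rcases e2 with h | h <;> exact ⟨_, h⟩
    have d3 : (m:ℤ) ∣ 2 := by
      have := dvd_sub d1 d2
      simpa using this
    have d4 : m ∣ 2 := by exact_mod_cast d3
    have := Nat.le_of_dvd (by norm_num) d4
    obtain ⟨j, hj⟩ := hm
    omega
  · -- type (a)
    push_neg at hA hC
    have hv0 : v ≠ 0 := hB
    have e1 : (2 * (u:ℤ) - (b:ℤ)).natAbs = m * y1 ∨
        (2 * (u:ℤ) - (b:ℤ)).natAbs = m * y2 := by omega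
    have e2 : (2 * (v:ℤ) - (b:ℤ)).natAbs = m * y1 ∨
        (2 * (v:ℤ) - (b:ℤ)).natAbs = m * y2 := by omega
    have d1 : (m:ℤ) ∣ (2 * (u:ℤ) - (b:ℤ)) := by
      apply dvd_of_int; rcases e1 with h | h <;> exact ⟨_, h⟩
    have d2 : (m:ℤ) ∣ (2 * (v:ℤ) - (b:ℤ)) := by
      apply dvd_of_int; rcases e2 with h | h <;> exact ⟨_, h⟩
    have du2 : (m:ℤ) ∣ 2 * (u:ℤ) := by
      have := dvd_add d1 hmb; simpa using this
    have dv2 : (m:ℤ) ∣ 2 * (v:ℤ) := by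
      have := dvd_add d2 hmb; simpa using this
    have hcop : Nat.Coprime m 2 := Nat.coprime_two_right.mpr hm
    have du : m ∣ u := by
      have h2 : m ∣ 2 * u := by exact_mod_cast du2
      exact hcop.dvd_of_dvd_mul_left h2
    have dv : m ∣ v := by
      have h2 : m ∣ 2 * v := by exact_mod_cast dv2
      exact hcop.dvd_of_dvd_mul_left h2
    obtain ⟨z1, rfl⟩ := du
    obtain ⟨z2, rfl⟩ := dv
    have eA : (2 * ((m * z1 : ℕ):ℤ) - (b:ℤ)).natAbs = m * g5 N z1 :=
      natAbs_factor m (m * z1) b N z1 hb rfl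
    have eB : (2 * ((m * z2 : ℕ):ℤ) - (b:ℤ)).natAbs = m * g5 N z2 :=
      natAbs_factor m (m * z2) b N z2 hb rfl
    rw [eA, eB] at hK
    -- hK : max (m g1) (m g2) = m y1 ∧ min = m y2
    have hy1 : y1 = max (g5 N z1) (g5 N z2) := by
      have h1 : m * max (g5 N z1) (g5 N z2) = m * y1 := by
        rcases le_total (g5 N z1) (g5 N z2) with h | h
        · rw [max_eq_right h, ← max_eq_right (Nat.mul_le_mul_left m h)]; exact hK.1
        · rw [max_eq_left h, ← max_eq_left (Nat.mul_le_mul_left m h)]; exact hK.1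
      exact (Nat.eq_of_mul_eq_mul_left hm0 h1).symm
    have hy2 : y2 = min (g5 N z1) (g5 N z2) := by
      have h1 : m * min (g5 N z1) (g5 N z2) = m * y2 := by
        rcases le_total (g5 N z1) (g5 N z2) with h | h
        · rw [min_eq_left h, ← min_eq_left (Nat.mul_le_mul_left m h)]; exact hK.2
        · rw [min_eq_right h, ← min_eq_right (Nat.mul_le_mul_left m h)]; exact hK.2
      exact (Nat.eq_of_mul_eq_mul_left hm0 h1).symm
    have hprod : y1 * y2 = g5 N z1 * g5 N z2 := by
      rw [hy1, hy2]
      rcases le_total (g5 N z1) (g5 N z2) with h | h <;>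
        simp [max_eq_right, max_eq_left, min_eq_left, min_eq_right, h, Nat.mul_comm]
    have hz2pos : 0 < z2 := by
      rcases Nat.eq_zero_or_pos z2 with h | h
      · exfalso; apply hv0; rw [h, Nat.mul_zero]
      · exact h
    have hz21 : z2 < z1 := by
      have h1 := hdp.1
      have h2 := hC.1
      have : m * z2 < m * z1 := by omega
      exact Nat.lt_of_mul_lt_mul_left this
    have hz1N : z1 < N := by
      have h1 := hdp.2
      have : m * z1 < m * N := by omega
      exact Nat.lt_of_mul_lt_mul_left this
    refine ⟨z1, z2, ⟨hz2pos, hz21, hz1N, ?_⟩, rfl⟩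
    have hp := hZ.2.2.2
    rw [hprod] at hp
    rw [mod5_iff, Nat.cast_mul] at hp ⊢
    exact (prod5 _ _ _ _ (g5_cast ⟨2^n, hN⟩ z1) (g5_cast ⟨2^n, hN⟩ z2)).mp hp

lemma backward {m n N b : ℕ} (hm : Odd m) (hm1 : 1 < m) (hN : N = 5 * 2 ^ n)
    (hb : b = m * N) :
    ∀ t (p : ℕ × ℕ), p.2 ≤ p.1 ∧ p.1 ≤ b - 1 →
      (Kpair b)^[t] p = (m * (3 * 2 ^ n), m * 2 ^ n) →
      ∃ z1 z2, ZC N z1 z2 ∧ p = (m * z1, m * z2) := by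
  intro t
  induction t with
  | zero =>
    intro p hdp hK
    simp only [Function.iterate_zero, id_eq] at hK
    exact ⟨3 * 2 ^ n, 2 ^ n, ZCF hN, hK⟩
  | succ t ih =>
    intro p hdp hK
    rw [Function.iterate_succ_apply] at hK
    have hb2 : 2 ≤ b := by
      have : 0 < N := by rw [hN]; positivity
      have : m * 1 ≤ m * N := Nat.mul_le_mul_left m this
      omega
    obtain ⟨y1, y2, hZ, hKp⟩ := ih (Kpair b p) (DPstep hb2 hdp) hK
    exact back_step hm hm1 hN hb hdp hZ hKp



def Tfin (n : ℕ) : Finset (ℕ × ℕ) :=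
  ((Finset.range (5 * 2 ^ n)) ×ˢ (Finset.range (5 * 2 ^ n))).filter
    (fun q => 0 < q.2 ∧ q.2 < q.1 ∧ ((q.1 * q.2) % 5 = 2 ∨ (q.1 * q.2) % 5 = 3))

def Rr (i : ℕ) : ℕ := if i = 0 then 1 else if i = 1 then 1 else if i = 2 then 2 else 3
def Ss (i : ℕ) : ℕ := if i = 0 then 2 else if i = 1 then 3 else if i = 2 then 4 else 4

def enc (a : ℕ × ℕ × ℕ) : ℕ × ℕ := sort2 (5 * a.2.1 + Rr a.1, 5 * a.2.2 + Ss a.1)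

@[simp] lemma Rr0 : Rr 0 = 1 := rfl
@[simp] lemma Rr1 : Rr 1 = 1 := rfl
@[simp] lemma Rr2 : Rr 2 = 2 := rfl
@[simp] lemma Rr3 : Rr 3 = 3 := rfl
@[simp] lemma Ss0 : Ss 0 = 2 := rfl
@[simp] lemma Ss1 : Ss 1 = 3 := rfl
@[simp] lemma Ss2 : Ss 2 = 4 := rfl
@[simp] lemma Ss3 : Ss 3 = 4 := rfl

lemma mem_T {n q1 q2 r s : ℕ} (hq1 : q1 < 2 ^ n) (hq2 : q2 < 2 ^ n)
    (hr0 : 0 < r) (hrs : r < s) (hs5 : s < 5)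
    (hp : (r * s) % 5 = 2 ∨ (r * s) % 5 = 3) :
    sort2 (5 * q1 + r, 5 * q2 + s) ∈ Tfin n := by
  have hx5 : (5 * q1 + r) % 5 = r := by omega
  have hy5 : (5 * q2 + s) % 5 = s := by omega
  have hne : 5 * q1 + r ≠ 5 * q2 + s := by omega
  have hmul : max (5 * q1 + r) (5 * q2 + s) * min (5 * q1 + r) (5 * q2 + s)
      = (5 * q1 + r) * (5 * q2 + s) := by
    rcases le_total (5 * q1 + r) (5 * q2 + s) with h | h <;>
      simp [max_eq_right, max_eq_left, min_eq_left, min_eq_right, h, Nat.mul_comm]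
  simp only [Tfin, sort2, Finset.mem_filter, Finset.mem_product, Finset.mem_range]
  refine ⟨⟨by omega, by omega⟩, by omega, by omega, ?_⟩
  rw [hmul, Nat.mul_mod, hx5, hy5]
  exact hp

lemma card_Tfin (n : ℕ) : (Tfin n).card = 4 ^ (n + 1) := by
  have hcard : ((Finset.range 4) ×ˢ ((Finset.range (2 ^ n)) ×ˢ (Finset.range (2 ^ n)))).card
      = 4 ^ (n + 1) := by
    simp [Finset.card_product, Finset.card_range]
    rw [show (4 : ℕ) = 2 * 2 from rfl, mul_pow, pow_succ]
    ring
  rw [← hcard]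
  refine (Finset.card_bij (fun a _ => enc a) ?_ ?_ ?_).symm
  · -- maps into Tfin
    rintro ⟨i, q1, q2⟩ ha
    simp only [Finset.mem_product, Finset.mem_range] at ha
    obtain ⟨hi, hq1, hq2⟩ := ha
    interval_cases i <;> simp only [enc, Rr0, Rr1, Rr2, Rr3, Ss0, Ss1, Ss2, Ss3] <;>
      exact mem_T hq1 hq2 (by norm_num) (by norm_num) (by norm_num) (by norm_num)
  · -- injective
    rintro ⟨i, q1, q2⟩ ha ⟨j, p1, p2⟩ hb heq
    simp only [Finset.mem_product, Finset.mem_range] at ha hb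
    obtain ⟨hi, hq1, hq2⟩ := ha
    obtain ⟨hj, hp1, hp2⟩ := hb
    simp only [enc, sort2, Prod.mk.injEq] at heq ⊢
    interval_cases i <;> interval_cases j <;>
      simp only [Rr0, Rr1, Rr2, Rr3, Ss0, Ss1, Ss2, Ss3] at heq <;> omega
  · -- surjective
    rintro ⟨z1, z2⟩ hz
    simp only [Tfin, Finset.mem_filter, Finset.mem_product, Finset.mem_range] at hz
    obtain ⟨⟨hz1, hz2⟩, h0, h21, hp⟩ := hz
    rw [Nat.mul_mod] at hp
    have e1 : 5 * (z1 / 5) + z1 % 5 = z1 := by omega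
    have e2 : 5 * (z2 / 5) + z2 % 5 = z2 := by omega
    have q1lt : z1 / 5 < 2 ^ n := by omega
    have q2lt : z2 / 5 < 2 ^ n := by omega
    have hsort : ∀ x y : ℕ, y < x → sort2 (x, y) = (x, y) := by
      intro x y h; simp [sort2, max_eq_left, min_eq_right, le_of_lt h]
    have hsort' : ∀ x y : ℕ, y < x → sort2 (y, x) = (x, y) := by
      intro x y h; simp [sort2, max_eq_right, min_eq_left, le_of_lt h]
    have hd1 : z1 % 5 = 0 ∨ z1 % 5 = 1 ∨ z1 % 5 = 2 ∨ z1 % 5 = 3 ∨ z1 % 5 = 4 := by omega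
    have hd2 : z2 % 5 = 0 ∨ z2 % 5 = 1 ∨ z2 % 5 = 2 ∨ z2 % 5 = 3 ∨ z2 % 5 = 4 := by omega
    rcases hd1 with h1 | h1 | h1 | h1 | h1 <;> rcases hd2 with h2 | h2 | h2 | h2 | h2 <;>
      rw [h1, h2] at hp <;>
      [skip; skip; skip; skip; skip; skip; skip; skip; skip; skip; skip; skip; skip;
       skip; skip; skip; skip; skip; skip; skip; skip; skip; skip; skip; skip] <;>
    first
      | (exfalso; revert hp; decide)
      | exact ⟨(0, z1/5, z2/5), by
            simp only [Finset.mem_product, Finset.mem_range]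
            exact ⟨by norm_num, q1lt, q2lt⟩, by
            simp only [enc, Rr0, Ss0]
            rw [show 5*(z1/5)+1 = z1 by omega, show 5*(z2/5)+2 = z2 by omega]
            exact hsort z1 z2 h21⟩
      | exact ⟨(0, z2/5, z1/5), by
            simp only [Finset.mem_product, Finset.mem_range]
            exact ⟨by norm_num, q2lt, q1lt⟩, by
            simp only [enc, Rr0, Ss0]
            rw [show 5*(z2/5)+1 = z2 by omega, show 5*(z1/5)+2 = z1 by omega]
            exact hsort' z1 z2 h21⟩
      | exact ⟨(1, z1/5, z2/5), by
            simp only [Finset.mem_product, Finset.mem_range]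
            exact ⟨by norm_num, q1lt, q2lt⟩, by
            simp only [enc, Rr1, Ss1]
            rw [show 5*(z1/5)+1 = z1 by omega, show 5*(z2/5)+3 = z2 by omega]
            exact hsort z1 z2 h21⟩
      | exact ⟨(1, z2/5, z1/5), by
            simp only [Finset.mem_product, Finset.mem_range]
            exact ⟨by norm_num, q2lt, q1lt⟩, by
            simp only [enc, Rr1, Ss1]
            rw [show 5*(z2/5)+1 = z2 by omega, show 5*(z1/5)+3 = z1 by omega]
            exact hsort' z1 z2 h21⟩
      | exact ⟨(2, z1/5, z2/5), by
            simp only [Finset.mem_product, Finset.mem_range]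
            exact ⟨by norm_num, q1lt, q2lt⟩, by
            simp only [enc, Rr2, Ss2]
            rw [show 5*(z1/5)+2 = z1 by omega, show 5*(z2/5)+4 = z2 by omega]
            exact hsort z1 z2 h21⟩
      | exact ⟨(2, z2/5, z1/5), by
            simp only [Finset.mem_product, Finset.mem_range]
            exact ⟨by norm_num, q2lt, q1lt⟩, by
            simp only [enc, Rr2, Ss2]
            rw [show 5*(z2/5)+2 = z2 by omega, show 5*(z1/5)+4 = z1 by omega]
            exact hsort' z1 z2 h21⟩
      | exact ⟨(3, z1/5, z2/5), by
            simp only [Finset.mem_product, Finset.mem_range]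
            exact ⟨by norm_num, q1lt, q2lt⟩, by
            simp only [enc, Rr3, Ss3]
            rw [show 5*(z1/5)+3 = z1 by omega, show 5*(z2/5)+4 = z2 by omega]
            exact hsort z1 z2 h21⟩
      | exact ⟨(3, z2/5, z1/5), by
            simp only [Finset.mem_product, Finset.mem_range]
            exact ⟨by norm_num, q2lt, q1lt⟩, by
            simp only [enc, Rr3, Ss3]
            rw [show 5*(z2/5)+3 = z2 by omega, show 5*(z1/5)+4 = z1 by omega]
            exact hsort' z1 z2 h21⟩



end KapAux18

open KapAux18 in
/-- for `b = 5m·2^n` with `m > 1` odd, every difference-pair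
predecessor of the fixed pair `(3b/5, b/5)` is of type (a) with both
coordinates divisible by `m`, and there are exactly `4^{n+1}` of them. -/
theorem kaprekar_fixed_pair_predecessors (m n b : ℕ) (hm : Odd m) (hm1 : 1 < m)
    (hb : b = 5 * m * 2 ^ n) :
    (∀ u v : ℕ, IsDiffPair b (u, v) →
      (∃ t : ℕ, (Kpair b)^[t] (u, v) = (3 * b / 5, b / 5)) →
      v < u ∧ 0 < v ∧ u + v ≠ b ∧ m ∣ u ∧ m ∣ v) ∧
    {p : ℕ × ℕ | IsDiffPair b p ∧
      ∃ t : ℕ, (Kpair b)^[t] p = (3 * b / 5, b / 5)}.ncard = 4 ^ (n + 1) := by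
  have hm0 : 0 < m := by omega
  have hb' : b = m * (5 * 2 ^ n) := by rw [hb]; ring
  have hF1 : 3 * b / 5 = m * (3 * 2 ^ n) := by
    have h3 : 3 * b = 5 * (m * (3 * 2 ^ n)) := by rw [hb]; ring
    rw [h3, Nat.mul_div_cancel_left _ (by norm_num)]
  have hF2 : b / 5 = m * 2 ^ n := by
    have h3 : b = 5 * (m * 2 ^ n) := by rw [hb]; ring
    rw [h3, Nat.mul_div_cancel_left _ (by norm_num)]
  have hback : ∀ u v : ℕ, IsDiffPair b (u, v) →
      (∃ t, (Kpair b)^[t] (u, v) = (3 * b / 5, b / 5)) →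
      ∃ z1 z2, ZC (5 * 2 ^ n) z1 z2 ∧ (u, v) = (m * z1, m * z2) := by
    rintro u v hdp ⟨t, ht⟩
    rw [hF1, hF2] at ht
    exact backward hm hm1 rfl hb' t (u, v) hdp ht
  constructor
  · rintro u v hdp hex
    obtain ⟨z1, z2, hZ, hE⟩ := hback u v hdp hex
    rw [Prod.mk.injEq] at hE
    obtain ⟨rfl, rfl⟩ := hE
    obtain ⟨hz2, hz21, hz1N, hzp⟩ := hZ
    obtain ⟨f1, f2, f3⟩ := ZC_facts ⟨hz2, hz21, hz1N, hzp⟩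
    refine ⟨mul_lt_mul_of_pos_left hz21 hm0, Nat.mul_pos hm0 hz2, ?_,
      ⟨z1, rfl⟩, ⟨z2, rfl⟩⟩
    intro hS
    rw [hb', ← Nat.mul_add] at hS
    have hzz := Nat.eq_of_mul_eq_mul_left hm0 hS
    omega
  · have hsetor : {p : ℕ × ℕ | IsDiffPair b p ∧ ∃ t, (Kpair b)^[t] p = (3 * b / 5, b / 5)}
        = ↑((Tfin n).image (fun q => (m * q.1, m * q.2))) := by
      ext ⟨u, v⟩
      simp only [Set.mem_setOf_eq, Finset.coe_image, Set.mem_image, Finset.mem_coe]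
      constructor
      · rintro ⟨hdp, hex⟩
        obtain ⟨z1, z2, hZ, hE⟩ := hback u v hdp hex
        refine ⟨(z1, z2), ?_, hE.symm⟩
        simp only [Tfin, Finset.mem_filter, Finset.mem_product, Finset.mem_range]
        obtain ⟨a1, a2, a3, a4⟩ := hZ
        exact ⟨⟨by omega, by omega⟩, a1, a2, a4⟩
      · rintro ⟨⟨z1, z2⟩, hmem, hE⟩
        simp only [Tfin, Finset.mem_filter, Finset.mem_product, Finset.mem_range] at hmem
        obtain ⟨⟨b1, b2⟩, c1, c2, c3⟩ := hmem
        have hZ : ZC (5 * 2 ^ n) z1 z2 := ⟨c1, c2, b1, c3⟩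
        dsimp only at hE
        rw [Prod.mk.injEq] at hE
        obtain ⟨h1, h2⟩ := hE
        subst h1; subst h2
        have hdp : IsDiffPair b (m * z1, m * z2) := by
          constructor
          · exact Nat.mul_le_mul_left m (le_of_lt c2)
          · have : m * z1 < m * (5 * 2 ^ n) := mul_lt_mul_of_pos_left b1 hm0
            omega
        refine ⟨hdp, n + 1, ?_⟩
        rw [hF1, hF2]
        exact forwardKp hm1 rfl hb' hZ
    rw [hsetor, Set.ncard_coe_finset,
      Finset.card_image_of_injective _ ?_, card_Tfin n]
    rintro ⟨a1, a2⟩ ⟨c1, c2⟩ h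
    rw [Prod.mk.injEq] at h ⊢
    exact ⟨Nat.eq_of_mul_eq_mul_left hm0 h.1, Nat.eq_of_mul_eq_mul_left hm0 h.2⟩
end
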